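/- Finite model property for negative universal sentences: if σ is a first-order sentence of the form (∀v₁)…(∀vₖ)(¬θ₁ ∧ … ∧ ¬θₙ) with each θᵢ atomic, over a language with finitely many function and relation symbols, then σ has a model if and only if σ has a finite model. -/

import Mathlib

/-!
A negated relational atom holds in any structure with empty relations, such as a point, and a
negated atom holds in a direct product as soon as it holds in one factor. So it remains to show
that an equation `s = t` with no solution in some structure has none in some finite structure.
Run the unification algorithm on `s = t`: it must fail, and each of its steps has a finite
counterpart. A clash of function symbols is detected by a two-element structure. An
occurs-check failure `x = t[x]` is detected by a counter modulo `d + 1` along the path of length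
`d` from the root of `t` to `x`. Decomposing `f ts = f us` corresponds to the structure `A ⊕ Aⁿ`,
in which `f` records its arguments, over a finite structure `A` in which the argument equations
have no common solution. Eliminating a variable needs no new structure.
-/

open FirstOrder Language Structure

namespace FirstOrder.Language

variable {L : Language} {α : Type*}

namespace Term

def size : L.Term α → ℕ
  | var _ => 1
  | func _ ts => 1 + ∑ i, (ts i).size

inductive OccursAt (x : α) : L.Term α → List (Σ n, L.Functions n × Fin n) → Prop
  | var : OccursAt x (var x) []
  | func {n : ℕ} (f : L.Functions n) (ts : Fin n → L.Term α) (j : Fin n) {q} :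
      OccursAt x (ts j) q → OccursAt x (func f ts) (⟨n, f, j⟩ :: q)

variable [DecidableEq α]

theorem exists_occursAt_of_mem_varFinset {x : α} :
    ∀ {t : L.Term α}, x ∈ t.varFinset → ∃ q, OccursAt x t q
  | var y, h => by
    obtain rfl := Finset.mem_singleton.mp h
    exact ⟨[], .var⟩
  | func f ts, h => by
    obtain ⟨j, -, hj⟩ := Finset.mem_biUnion.mp h
    obtain ⟨q, hq⟩ := exists_occursAt_of_mem_varFinset hj
    exact ⟨_, .func f ts j hq⟩

theorem realize_congr {M : Type*} [L.Structure M] {v w : α → M} :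
    ∀ {t : L.Term α}, (∀ x ∈ t.varFinset, v x = w x) → t.realize v = t.realize w
  | var x, h => h x (Finset.mem_singleton_self x)
  | func f ts, h => by
    simp only [realize_func]
    congr 1
    funext i
    exact realize_congr fun x hx => h x (Finset.mem_biUnion.mpr ⟨i, Finset.mem_univ i, hx⟩)

theorem realize_subst_update {M : Type*} [L.Structure M] (u : L.Term α) (x : α)
    (t : L.Term α) (v : α → M) :
    (u.subst (Function.update var x t)).realize v =
      u.realize (Function.update v x (t.realize v)) := by
  rw [realize_subst]
  congr 1
  funext y
  exact Function.apply_update (fun _ s => s.realize v) var x t y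

theorem varFinset_subst_update_subset (u : L.Term α) (x : α) (t : L.Term α) :
    (u.subst (Function.update var x t)).varFinset ⊆ u.varFinset.erase x ∪ t.varFinset := by
  induction u with
  | var y =>
    rcases eq_or_ne y x with rfl | hy
    · simp
    · simp [hy]
  | func f ts ih =>
    intro y hy
    simp only [subst, varFinset, Finset.mem_biUnion, Finset.mem_univ, true_and] at hy
    obtain ⟨i, hi⟩ := hy
    have := ih i hi
    simp only [Finset.mem_union, Finset.mem_erase, varFinset, Finset.mem_biUnion,
      Finset.mem_univ, true_and] at this ⊢
    tauto

end Term

def HeadIs {n : ℕ} (_f : L.Functions n) : Type := Prop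

instance {n : ℕ} (f : L.Functions n) : L.Structure (HeadIs f) where
  funMap {m} g _ := (⟨m, g⟩ : Σ k, L.Functions k) = ⟨n, f⟩
  RelMap _ _ := False

instance {n : ℕ} (f : L.Functions n) : Finite (HeadIs f) := inferInstanceAs (Finite Prop)

instance {n : ℕ} (f : L.Functions n) : Nonempty (HeadIs f) := inferInstanceAs (Nonempty Prop)

/-- `f` stores the `proj`-images of its arguments, so `f b = f b'` forces `proj ∘ b = proj ∘ b'`,
while `proj` is a homomorphism onto `A`. -/
def Unfold {n : ℕ} (_f : L.Functions n) (A : Type*) : Type _ := A ⊕ (Fin n → A)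

namespace Unfold

variable {n : ℕ} (f : L.Functions n) (A : Type*) [L.Structure A]

instance [Finite A] : Finite (Unfold f A) := inferInstanceAs (Finite (A ⊕ _))

instance [Nonempty A] : Nonempty (Unfold f A) := inferInstanceAs (Nonempty (A ⊕ _))

variable {f A}

def proj : Unfold f A → A
  | .inl a => a
  | .inr c => funMap f c

open Classical in
noncomputable instance : L.Structure (Unfold f A) where
  funMap {m} g b :=
    if h : (⟨m, g⟩ : Σ k, L.Functions k) = ⟨n, f⟩ then
      .inr fun i => proj (b (i.cast (congrArg Sigma.fst h).symm))
    else .inl (funMap g (proj ∘ b))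
  RelMap R b := RelMap R (proj ∘ b)

theorem funMap_self (b : Fin n → Unfold f A) : funMap f b = .inr (proj ∘ b) :=
  dif_pos rfl

theorem proj_funMap {m : ℕ} (g : L.Functions m) (b : Fin m → Unfold f A) :
    proj (funMap g b) = funMap g (proj ∘ b) := by
  by_cases h : (⟨m, g⟩ : Σ k, L.Functions k) = ⟨n, f⟩
  · obtain ⟨rfl, hg⟩ := Sigma.mk.inj_iff.mp h
    obtain rfl := eq_of_heq hg
    rw [funMap_self]
    rfl
  · exact congrArg proj (dif_neg h)

variable (f A)

def projHom : Unfold f A →[L] A where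
  toFun := proj
  map_fun' := proj_funMap
  map_rel' _ _ := id

end Unfold

/-- Coordinate `r` belongs to the `r`-th step of the path `s :: q`, read cyclically, and counts
modulo `q.length + 2` how many steps of the path lie above the current subterm. -/
def PathCounter (_s : Σ n, L.Functions n × Fin n) (q : List (Σ n, L.Functions n × Fin n)) :
    Type :=
  Fin (q.length + 1) → ZMod (q.length + 2)

namespace PathCounter

variable (s : Σ n, L.Functions n × Fin n) (q : List (Σ n, L.Functions n × Fin n))

instance : Finite (PathCounter s q) := inferInstanceAs (Finite (Fin _ → ZMod _))

instance : Nonempty (PathCounter s q) := inferInstanceAs (Nonempty (Fin _ → ZMod _))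

open Classical in
noncomputable instance : L.Structure (PathCounter s q) where
  funMap {m} g b r :=
    if h : ∃ j, (s :: q).get r = ⟨m, g, j⟩ then b h.choose (r + 1) + 1 else 0
  RelMap _ _ := False

variable {s q}

theorem funMap_apply {m : ℕ} {g : L.Functions m} {j : Fin m} {r : Fin (q.length + 1)}
    (hr : (s :: q).get r = ⟨m, g, j⟩) (b : Fin m → PathCounter s q) :
    funMap g b r = b j (r + 1) + 1 := by
  have h : ∃ j, (s :: q).get r = ⟨m, g, j⟩ := ⟨j, hr⟩
  have hj : h.choose = j := by simpa using h.choose_spec.symm.trans hr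
  simp only [Structure.funMap, dif_pos h, hj]

open Fin.NatCast in
theorem realize_apply_of_occursAt {x : α} {u : L.Term α}
    {q' : List (Σ n, L.Functions n × Fin n)} (h : u.OccursAt x q') (v : α → PathCounter s q) :
    ∀ r ≤ q.length + 1, (s :: q).drop r = q' →
      u.realize v (r : Fin (q.length + 1)) =
        ((q.length + 1 - r : ℕ) : ZMod (q.length + 2)) + v x 0 := by
  induction h with
  | var =>
    intro r hr hdrop
    obtain rfl : r = q.length + 1 := le_antisymm hr (List.drop_eq_nil_iff.mp hdrop)
    simp
  | func f ts j hocc ih =>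
    intro r hr hdrop
    have hlt : r < q.length + 1 := by
      by_contra! hle
      simp [List.drop_eq_nil_of_le (show (s :: q).length ≤ r from hle)] at hdrop
    rw [List.drop_eq_getElem_cons hlt, List.cons.injEq] at hdrop
    have hget : (s :: q).get (r : Fin (q.length + 1)) = ⟨_, f, j⟩ := by
      simpa [Nat.mod_eq_of_lt hlt] using hdrop.1
    rw [Term.realize_func, funMap_apply hget, ← Nat.cast_succ, ih (r + 1) hlt hdrop.2,
      show q.length + 1 - r = q.length + 1 - (r + 1) + 1 by omega, Nat.cast_succ,
      add_right_comm]

theorem realize_ne_of_occursAt {x : α} {t : L.Term α} (h : t.OccursAt x (s :: q))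
    (v : α → PathCounter s q) : v x ≠ t.realize v := by
  intro hx
  have hcycle : v x 0 = ((q.length + 1 : ℕ) : ZMod (q.length + 2)) + v x 0 := by
    simpa [hx] using realize_apply_of_occursAt h v 0 (Nat.zero_le _) rfl
  have hdvd := (ZMod.natCast_eq_zero_iff _ _).mp (right_eq_add.mp hcycle)
  exact absurd (Nat.le_of_dvd (Nat.succ_pos _) hdvd) (by omega)

end PathCounter

abbrev Equations (L : Language) (α : Type*) := List (L.Term α × L.Term α)

namespace Equations

section

variable (E : L.Equations α) {M : Type*} [L.Structure M]

def size : ℕ := (E.map fun p => p.1.size + p.2.size).sum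

def Solves (v : α → M) : Prop := ∀ p ∈ E, p.1.realize v = p.2.realize v

def FinitelyUnsolvable : Prop :=
  ∃ (A : Type) (_ : L.Structure A), Finite A ∧ Nonempty A ∧ ∀ v : α → A, ¬ E.Solves v

variable {E}

theorem FinitelyUnsolvable.of_solves {E' : L.Equations α}
    (h : ∀ {A : Type} [L.Structure A] (v : α → A), E'.Solves v → E.Solves v) :
    E.FinitelyUnsolvable → E'.FinitelyUnsolvable := by
  rintro ⟨A, _, hfin, hne, hA⟩
  exact ⟨A, _, hfin, hne, fun v hv => hA v (h v hv)⟩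

theorem FinitelyUnsolvable.mono {E' : L.Equations α} (h : E ⊆ E') :
    E.FinitelyUnsolvable → E'.FinitelyUnsolvable :=
  .of_solves fun _ hv p hp => hv p (h hp)

theorem solves_swap_cons {s t : L.Term α} {v : α → M} :
    Solves ((s, t) :: E) v ↔ Solves ((t, s) :: E) v := by
  simp only [Solves, List.forall_mem_cons, eq_comm]

theorem Solves.func_func_cons {n : ℕ} {f : L.Functions n} {ts us : Fin n → L.Term α}
    {v : α → M} (h : Solves (List.ofFn (fun i => (ts i, us i)) ++ E) v) :
    Solves ((func f ts, func f us) :: E) v := by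
  simp only [Solves, List.forall_mem_cons, List.forall_mem_append,
    List.forall_mem_ofFn_iff] at h ⊢
  exact ⟨by simp only [Term.realize_func, h.1], h.2⟩

theorem size_ofFn_append_lt {n : ℕ} (f g : L.Functions n) (ts us : Fin n → L.Term α) :
    Equations.size (List.ofFn (fun i => (ts i, us i)) ++ E) <
      Equations.size ((func f ts, func g us) :: E) := by
  simp only [size, List.map_append, List.sum_append, List.map_cons, List.sum_cons, List.map_ofFn,
    List.sum_ofFn, Function.comp_def, Term.size, Finset.sum_add_distrib]
  omega

theorem finitelyUnsolvable_func_func {m n : ℕ} {f : L.Functions m} {g : L.Functions n}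
    (hfg : (⟨m, f⟩ : Σ k, L.Functions k) ≠ ⟨n, g⟩) (ts : Fin m → L.Term α)
    (us : Fin n → L.Term α) : FinitelyUnsolvable [(func f ts, func g us)] := by
  refine ⟨HeadIs f, inferInstance, inferInstance, inferInstance, fun v hv => hfg ?_⟩
  have heads : ((⟨m, f⟩ : Σ k, L.Functions k) = ⟨m, f⟩) =
      ((⟨n, g⟩ : Σ k, L.Functions k) = ⟨m, f⟩) :=
    hv _ List.mem_cons_self
  exact (cast heads rfl).symm

theorem FinitelyUnsolvable.func_func_cons {n : ℕ} {f : L.Functions n}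
    {ts us : Fin n → L.Term α}
    (h : FinitelyUnsolvable (List.ofFn (fun i => (ts i, us i)) ++ E)) :
    FinitelyUnsolvable ((func f ts, func f us) :: E) := by
  obtain ⟨A, _, _, _, hA⟩ := h
  refine ⟨Unfold f A, inferInstance, inferInstance, inferInstance,
    fun v hv => hA (Unfold.proj ∘ v) ?_⟩
  have hproj (t : L.Term α) : t.realize (Unfold.proj ∘ v) = Unfold.proj (t.realize v) :=
    HomClass.realize_term (Unfold.projHom f A)
  simp only [Solves, List.forall_mem_cons, List.forall_mem_append, List.forall_mem_ofFn_iff,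
    hproj] at hv ⊢
  obtain ⟨hhead, htail⟩ := hv
  refine ⟨fun i => ?_, fun p hp => by rw [htail p hp]⟩
  simp only [Term.realize_func, Unfold.funMap_self] at hhead
  exact congrFun (Sum.inr_injective hhead) i

end

section

variable [DecidableEq α] {M : Type*} [L.Structure M]

def vars (E : L.Equations α) : Finset α :=
  E.foldr (fun p s => p.1.varFinset ∪ p.2.varFinset ∪ s) ∅

def subst (E : L.Equations α) (σ : α → L.Term α) : L.Equations α :=
  E.map fun p => (p.1.subst σ, p.2.subst σ)

def measure (E : L.Equations α) : ℕ ×ₗ ℕ := toLex (E.vars.card, E.size)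

variable {E : L.Equations α}

@[simp]
theorem mem_vars {x : α} :
    x ∈ E.vars ↔ ∃ p ∈ E, x ∈ p.1.varFinset ∨ x ∈ p.2.varFinset := by
  induction E with
  | nil => simp [vars]
  | cons p E ih => simp [vars, ← ih, or_assoc]

theorem vars_mono {E' : L.Equations α} (h : E ⊆ E') : E.vars ⊆ E'.vars := fun y hy => by
  obtain ⟨p, hp, hy⟩ := mem_vars.mp hy
  exact mem_vars.mpr ⟨p, h hp, hy⟩

theorem vars_swap_cons (s t : L.Term α) :
    Equations.vars ((s, t) :: E) = Equations.vars ((t, s) :: E) := by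
  ext y
  simp only [mem_vars, List.mem_cons]
  aesop

theorem vars_ofFn_append_subset {n : ℕ} (f g : L.Functions n) (ts us : Fin n → L.Term α) :
    Equations.vars (List.ofFn (fun i => (ts i, us i)) ++ E) ⊆
      Equations.vars ((func f ts, func g us) :: E) := by
  intro y
  simp only [mem_vars, List.mem_append, List.mem_ofFn, List.mem_cons]
  aesop

theorem solves_subst_update {x : α} {t : L.Term α} {v : α → M} :
    (E.subst (Function.update var x t)).Solves v ↔
      E.Solves (Function.update v x (t.realize v)) := by
  simp only [Solves, subst, List.forall_mem_map, Term.realize_subst_update]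

theorem Solves.subst_update {x : α} {t : L.Term α} {v : α → M}
    (h : Solves ((var x, t) :: E) v) : (E.subst (Function.update var x t)).Solves v := by
  rw [solves_subst_update, Function.update_eq_self_iff.mpr (h _ List.mem_cons_self).symm]
  exact fun p hp => h p (List.mem_cons_of_mem _ hp)

theorem Solves.update_of_subst {x : α} {t : L.Term α} {v : α → M}
    (hx : x ∉ t.varFinset) (h : (E.subst (Function.update var x t)).Solves v) :
    Solves ((var x, t) :: E) (Function.update v x (t.realize v)) := by
  refine List.forall_mem_cons.mpr ⟨?_, solves_subst_update.mp h⟩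
  rw [Term.realize_var, Function.update_self]
  exact Term.realize_congr fun y hy =>
    (Function.update_of_ne (ne_of_mem_of_not_mem hy hx) _ _).symm

theorem card_vars_subst_update_lt {x : α} {t : L.Term α} (hx : x ∉ t.varFinset) :
    (E.subst (Function.update var x t)).vars.card <
      (Equations.vars ((var x, t) :: E)).card := by
  refine (Finset.card_le_card fun y hy => ?_).trans_lt
    (Finset.card_erase_lt_of_mem
      (mem_vars.mpr ⟨_, List.mem_cons_self, .inl (Finset.mem_singleton_self x)⟩))
  obtain ⟨_, hp', hy⟩ := mem_vars.mp hy
  obtain ⟨p, hp, rfl⟩ := List.mem_map.mp hp'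
  have hsub (u : L.Term α) := @Term.varFinset_subst_update_subset _ _ _ u x t y
  simp only [Finset.mem_union, Finset.mem_erase] at hsub
  refine Finset.mem_erase.mpr ?_
  rcases hy.imp (hsub p.1) (hsub p.2) with (⟨hne, h⟩ | h) | (⟨hne, h⟩ | h)
  · exact ⟨hne, mem_vars.mpr ⟨p, List.mem_cons_of_mem _ hp, .inl h⟩⟩
  · exact ⟨ne_of_mem_of_not_mem h hx, mem_vars.mpr ⟨_, List.mem_cons_self, .inr h⟩⟩
  · exact ⟨hne, mem_vars.mpr ⟨p, List.mem_cons_of_mem _ hp, .inr h⟩⟩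
  · exact ⟨ne_of_mem_of_not_mem h hx, mem_vars.mpr ⟨_, List.mem_cons_self, .inr h⟩⟩

theorem measure_lt_of_card_lt {E' : L.Equations α} (h : E.vars.card < E'.vars.card) :
    E.measure < E'.measure :=
  Prod.Lex.lt_iff.mpr (.inl h)

theorem measure_lt_of_subset_of_size_lt {E' : L.Equations α} (hvars : E.vars ⊆ E'.vars)
    (hsize : E.size < E'.size) : E.measure < E'.measure :=
  Prod.Lex.lt_iff.mpr ((Finset.card_le_card hvars).lt_or_eq.imp_right (⟨·, hsize⟩))

theorem finitelyUnsolvable_var_of_mem_varFinset {x : α} {t : L.Term α}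
    (hx : x ∈ t.varFinset) (ht : t ≠ var x) : FinitelyUnsolvable [(var x, t)] := by
  obtain ⟨q, hq⟩ := Term.exists_occursAt_of_mem_varFinset hx
  cases hq with
  | var => exact absurd rfl ht
  | func f ts j hocc =>
    exact ⟨PathCounter _ _, inferInstance, inferInstance, inferInstance, fun v hv =>
      PathCounter.realize_ne_of_occursAt (.func f ts j hocc) v (hv _ List.mem_cons_self)⟩

theorem finitelyUnsolvable_var_cons {x : α} {t : L.Term α} (ht : t ≠ var x)
    (hM : ∀ v : α → M, ¬ Solves ((var x, t) :: E) v)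
    (ih : ∀ E' : L.Equations α, E'.vars.card < (Equations.vars ((var x, t) :: E)).card →
      (∀ v : α → M, ¬ E'.Solves v) → E'.FinitelyUnsolvable) :
    FinitelyUnsolvable ((var x, t) :: E) := by
  by_cases hx : x ∈ t.varFinset
  · exact (finitelyUnsolvable_var_of_mem_varFinset hx ht).mono (by simp)
  · exact (ih _ (card_vars_subst_update_lt hx) fun v hv => hM _ (hv.update_of_subst hx)).of_solves
      fun _ => Solves.subst_update

theorem finitelyUnsolvable_of_forall_not_solves [Nonempty M] (E : L.Equations α) :
    (∀ v : α → M, ¬ E.Solves v) → E.FinitelyUnsolvable := by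
  refine (InvImage.wf measure wellFounded_lt).induction
    (C := fun E => (∀ v : α → M, ¬ E.Solves v) → E.FinitelyUnsolvable) E fun E ih hM => ?_
  rcases E with _ | ⟨⟨⟨x⟩ | ⟨f, ts⟩, t⟩, E⟩
  · exact (hM (fun _ => Classical.ofNonempty) fun _ h => absurd h List.not_mem_nil).elim
  · by_cases ht : t = var x
    · subst ht
      refine (ih E ?_ fun v hv => hM v (List.forall_mem_cons.mpr ⟨rfl, hv⟩)).mono (by simp)
      exact measure_lt_of_subset_of_size_lt (vars_mono (by simp)) (by simp [size, Term.size])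
    · exact finitelyUnsolvable_var_cons ht hM fun E' hE' => ih E' (measure_lt_of_card_lt hE')
  rcases t with ⟨x⟩ | ⟨g, us⟩
  · refine (finitelyUnsolvable_var_cons (fun h => by cases h)
      (fun v hv => hM v (solves_swap_cons.mp hv)) fun E' hE' => ih E' ?_).of_solves
      fun _ => solves_swap_cons.mp
    exact measure_lt_of_card_lt (vars_swap_cons (var x) _ ▸ hE')
  by_cases hfg : (⟨_, f⟩ : Σ n, L.Functions n) = ⟨_, g⟩
  · obtain ⟨rfl, hfg⟩ := Sigma.mk.inj_iff.mp hfg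
    obtain rfl := eq_of_heq hfg
    refine .func_func_cons (ih _ ?_ fun v hv => hM v hv.func_func_cons)
    exact measure_lt_of_subset_of_size_lt (vars_ofFn_append_subset _ _ _ _)
      (size_ofFn_append_lt _ _ _ _)
  · exact (finitelyUnsolvable_func_func hfg ts us).mono (by simp)

end

end Equations

instance piStructure {ι : Type*} (A : ι → Type*) [∀ i, L.Structure (A i)] :
    L.Structure (∀ i, A i) where
  funMap f xs i := funMap f fun j => xs j i
  RelMap R xs := ∀ i, RelMap R fun j => xs j i

def evalHom {ι : Type*} (A : ι → Type*) [∀ i, L.Structure (A i)] (i : ι) :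
    (∀ i, A i) →[L] A i where
  toFun x := x i
  map_fun' _ _ := rfl
  map_rel' _ _ h := h i

namespace BoundedFormula

variable {β : Type*} {k : ℕ} {φ : L.BoundedFormula β k}

theorem IsAtomic.realize_comp_hom (hφ : φ.IsAtomic) {M N F : Type*} [L.Structure M]
    [L.Structure N] [FunLike F M N] [L.HomClass F M N] (f : F) {v : β → M} {xs : Fin k → M} :
    φ.Realize v xs → φ.Realize (f ∘ v) (f ∘ xs) := by
  induction hφ with
  | equal t₁ t₂ =>
    simp only [realize_bdEqual, ← Sum.comp_elim, HomClass.realize_term]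
    exact congrArg f
  | rel R ts =>
    simp only [realize_rel, ← Sum.comp_elim, HomClass.realize_term]
    exact HomClass.map_rel f R _

theorem IsAtomic.exists_finite_forall_not_realize (hφ : φ.IsAtomic) {M : Type*}
    [L.Structure M] [Nonempty M] (hM : ∀ (v : β → M) (xs : Fin k → M), ¬ φ.Realize v xs) :
    ∃ (A : Type) (_ : L.Structure A), Finite A ∧ Nonempty A ∧
      ∀ (v : β → A) (xs : Fin k → A), ¬ φ.Realize v xs := by
  classical
  cases hφ with
  | equal s t =>
    have hM' : ∀ w : β ⊕ Fin k → M, ¬ Equations.Solves [(s, t)] w := fun w hw =>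
      hM (w ∘ Sum.inl) (w ∘ Sum.inr) (by simpa [Equations.Solves] using hw)
    obtain ⟨A, _, hfin, hne, hA⟩ := Equations.finitelyUnsolvable_of_forall_not_solves _ hM'
    exact ⟨A, _, hfin, hne, fun v xs h =>
      hA (Sum.elim v xs) (by simpa [Equations.Solves] using h)⟩
  | rel R ts =>
    exact ⟨PUnit, ⟨fun _ _ => .unit, fun _ _ => False⟩, inferInstance, inferInstance,
      fun _ _ h => h⟩

theorem realize_alls_foldr_inf_map_not {M : Type*} [L.Structure M]
    (θs : List (L.BoundedFormula Empty k)) :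
    M ⊨ ((θs.map BoundedFormula.not).foldr (· ⊓ ·) ⊤).alls ↔
      ∀ θ ∈ θs, ∀ (v : Empty → M) (xs : Fin k → M), ¬ θ.Realize v xs := by
  simp only [Sentence.Realize, realize_alls, realize_foldr_inf, List.forall_mem_map,
    realize_not, Unique.forall_iff]
  exact ⟨fun h θ hθ xs => h xs θ hθ, fun h xs θ hθ => h θ hθ xs⟩

end BoundedFormula

end FirstOrder.Language

theorem negative_universal_finite_model_property_general {L : Language}
    {k : ℕ} (θs : List (L.BoundedFormula Empty k)) (hθ : ∀ θ ∈ θs, θ.IsAtomic) :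
    (∃ (M : Type) (_ : L.Structure M) (_ : Nonempty M),
        M ⊨ ((θs.map BoundedFormula.not).foldr (· ⊓ ·) ⊤).alls) ↔
      (∃ (M : Type) (_ : Fintype M) (_ : L.Structure M) (_ : Nonempty M),
        M ⊨ ((θs.map BoundedFormula.not).foldr (· ⊓ ·) ⊤).alls) := by
  refine ⟨fun ⟨M, _, _, hM⟩ => ?_, fun ⟨M, _, _, hne, hM⟩ => ⟨M, _, hne, hM⟩⟩
  rw [BoundedFormula.realize_alls_foldr_inf_map_not] at hM
  choose A _ _ _ hA using fun i : Fin θs.length =>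
    (hθ _ (θs.get_mem i)).exists_finite_forall_not_realize (hM _ (θs.get_mem i))
  refine ⟨∀ i, A i, Fintype.ofFinite _, inferInstance, inferInstance, ?_⟩
  rw [BoundedFormula.realize_alls_foldr_inf_map_not]
  intro θ hθs v xs hreal
  obtain ⟨i, rfl⟩ := List.get_of_mem hθs
  exact hA i _ _ ((hθ _ hθs).realize_comp_hom (evalHom A i) hreal)

/-- Finite model property for negative universal sentences: over a language with finitely many
function and relation symbols, a sentence of the form (∀v₁)…(∀vₖ)(¬θ₁ ∧ … ∧ ¬θₙ), with each
θᵢ atomic, has a (nonempty) model iff it has a finite (nonempty) model. -/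
theorem negative_universal_finite_model_property {L : Language}
    [Finite (Σ n : ℕ, L.Functions n)] [Finite (Σ n : ℕ, L.Relations n)]
    {k : ℕ} (θs : List (L.BoundedFormula Empty k)) (hθ : ∀ θ ∈ θs, θ.IsAtomic) :
    (∃ (M : Type) (_ : L.Structure M) (_ : Nonempty M),
        M ⊨ ((θs.map BoundedFormula.not).foldr (· ⊓ ·) ⊤).alls) ↔
      (∃ (M : Type) (_ : Fintype M) (_ : L.Structure M) (_ : Nonempty M),
        M ⊨ ((θs.map BoundedFormula.not).foldr (· ⊓ ·) ⊤).alls) :=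
  negative_universal_finite_model_property_general θs hθ
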